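/- For every γ ∈ (0,1], every L₀ > 0, every function u : ℤ³ → ℂ with u(0) = 0 and Σ_{α ≠ 0} |α|·|u(α)|² ≤ L₀, and every k ∈ ℤ³ with |k| ≥ 1, one has Σ_{α ∈ ℤ³, 0 < |α| ≤ 2|k|, |k−α| ≥ (1/2)·|k|^{1−γ}} |α|·|u(α)|·|u(k−α)| ≤ 4·L₀·|k|^{γ/2}. -/

import Mathlib

/-!
Each term is split by the weighted AM–GM inequality
`|α| x y ≤ (K/2) |α| x² + (1/(2K)) |α| y²` with `K = |k|^{γ/2}`. Away from `α = k` the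
constraints give `|α| ≤ 2|k| = 4 K² · (1/2)|k|^{1-γ} ≤ 4 K² |k - α|`, so the second term is at
most `2K |k - α| y²`. Both `α ↦ α` and `α ↦ k - α` are injective, so each of the two resulting
series is bounded by `∑ |β| |u β|² ≤ L₀`, giving the total `(5/2) K L₀ ≤ 4 K L₀`.
-/

noncomputable def znorm (a : Fin 3 → ℤ) : ℝ := Real.sqrt (∑ i, ((a i : ℝ)) ^ 2)

@[simp]
lemma znorm_zero : znorm 0 = 0 := by
  simp [znorm]

lemma znorm_nonneg (a : Fin 3 → ℤ) : 0 ≤ znorm a := Real.sqrt_nonneg _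

lemma mul_mul_le_of_le_four_mul_sq_mul {n m x y K : ℝ} (hn : 0 ≤ n) (hK : 0 < K)
    (hnm : n ≤ 4 * K ^ 2 * m) :
    n * x * y ≤ K / 2 * (n * x ^ 2) + 2 * K * (m * y ^ 2) := by
  have hsq : 0 ≤ n * (K * x - y) ^ 2 := by positivity
  have hy : n * y ^ 2 ≤ 4 * K ^ 2 * m * y ^ 2 := mul_le_mul_of_nonneg_right hnm (sq_nonneg y)
  refine le_of_mul_le_mul_left ?_ (by positivity : (0 : ℝ) < 2 * K)
  nlinarith

lemma le_four_mul_rpow_half_sq_mul {r n m γ : ℝ} (hr : 0 < r) (hn : n ≤ 2 * r)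
    (hm : 1 / 2 * r ^ (1 - γ) ≤ m) :
    n ≤ 4 * (r ^ (γ / 2)) ^ 2 * m := by
  have hsplit : 2 * r = 4 * (r ^ (γ / 2)) ^ 2 * (1 / 2 * r ^ (1 - γ)) := by
    rw [← Real.rpow_natCast, ← Real.rpow_mul hr.le]
    calc 2 * r = 2 * r ^ (γ / 2 * (2 : ℕ) + (1 - γ)) := by norm_num
      _ = _ := by rw [Real.rpow_add hr]; ring
  rw [hsplit] at hn
  exact hn.trans (by gcongr)

lemma tsum_le_of_le_add_comp_injective {S β : Type*} {f : β → ℝ} (hf0 : ∀ b, 0 ≤ f b)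
    (hf : Summable f) {F : S → ℝ} (hF0 : ∀ s, 0 ≤ F s) {i j : S → β}
    (hi : Function.Injective i) (hj : Function.Injective j) {a b : ℝ} (ha : 0 ≤ a) (hb : 0 ≤ b)
    (hle : ∀ s, F s ≤ a * f (i s) + b * f (j s)) :
    ∑' s, F s ≤ (a + b) * ∑' x, f x := by
  have hfi : Summable fun s => f (i s) := hf.comp_injective hi
  have hfj : Summable fun s => f (j s) := hf.comp_injective hj
  have hbound : Summable fun s => a * f (i s) + b * f (j s) :=
    (hfi.mul_left a).add (hfj.mul_left b)
  calc ∑' s, F s ≤ ∑' s, (a * f (i s) + b * f (j s)) :=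
        (hbound.of_nonneg_of_le hF0 hle).tsum_le_tsum hle hbound
    _ = a * ∑' s, f (i s) + b * ∑' s, f (j s) := by
        rw [(hfi.mul_left a).tsum_add (hfj.mul_left b), tsum_mul_left, tsum_mul_left]
    _ ≤ a * ∑' x, f x + b * ∑' x, f x := by
        gcongr
        · exact tsum_comp_le_tsum_of_inj hf hf0 hi
        · exact tsum_comp_le_tsum_of_inj hf hf0 hj
    _ = (a + b) * ∑' x, f x := by ring

theorem bootstrap_piece_I_bound_general
    (γ : ℝ) (L₀ : ℝ) (hL₀ : 0 < L₀)
    (u : (Fin 3 → ℤ) → ℂ)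
    (hsum : Summable (fun α : {a : Fin 3 → ℤ // a ≠ 0} => znorm α.1 * ‖u α.1‖ ^ 2))
    (hL : (∑' α : {a : Fin 3 → ℤ // a ≠ 0}, znorm α.1 * ‖u α.1‖ ^ 2) ≤ L₀)
    (k : Fin 3 → ℤ) (hk : 1 ≤ znorm k) :
    (∑' α : {a : Fin 3 → ℤ //
        0 < znorm a ∧ znorm a ≤ 2 * znorm k ∧
          (1 / 2) * znorm k ^ ((1 : ℝ) - γ) ≤ znorm (k - a)},
      znorm α.1 * ‖u α.1‖ * ‖u (k - α.1)‖)
      ≤ 4 * L₀ * znorm k ^ (γ / 2) := by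
  set w : (Fin 3 → ℤ) → ℝ := fun a => znorm a * ‖u a‖ ^ 2
  set K := znorm k ^ (γ / 2)
  have hk0 : 0 < znorm k := zero_lt_one.trans_le hk
  have hK : 0 < K := Real.rpow_pos_of_pos hk0 _
  have hw : HasSum w (∑' α : {a : Fin 3 → ℤ // a ≠ 0}, w α.1) :=
    (hasSum_subtype_iff_of_support_subset (s := {a | a ≠ 0})
      fun a ha h0 => ha (by simp [w, h0])).mp hsum.hasSum
  calc _ ≤ (K / 2 + 2 * K) * ∑' a, w a :=
        tsum_le_of_le_add_comp_injective (fun a => by have := znorm_nonneg a; positivity) hw.summable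
          (fun α => by have := znorm_nonneg α.1; positivity) Subtype.val_injective
          (sub_right_injective.comp Subtype.val_injective) (by positivity) (by positivity)
          fun α => mul_mul_le_of_le_four_mul_sq_mul α.2.1.le hK
            (le_four_mul_rpow_half_sq_mul hk0 α.2.2.1 α.2.2.2)
    _ ≤ (K / 2 + 2 * K) * L₀ := by rw [← hw.tsum_eq] at hL; gcongr
    _ ≤ 4 * L₀ * K := by nlinarith

/-- For every `γ ∈ (0,1]`, `L₀ > 0`, every `u : ℤ³ → ℂ` with `u 0 = 0` and
`∑_{α ≠ 0} |α||u α|² ≤ L₀`, and every `k` with `|k| ≥ 1`,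
`∑_{0 < |α| ≤ 2|k|, |k−α| ≥ (1/2)|k|^{1−γ}} |α||u α||u (k−α)| ≤ 4·L₀·|k|^{γ/2}`. -/
theorem bootstrap_piece_I_bound
    (γ : ℝ) (hγ0 : 0 < γ) (hγ1 : γ ≤ 1) (L₀ : ℝ) (hL₀ : 0 < L₀)
    (u : (Fin 3 → ℤ) → ℂ) (hu0 : u 0 = 0)
    (hsum : Summable (fun α : {a : Fin 3 → ℤ // a ≠ 0} => znorm α.1 * ‖u α.1‖ ^ 2))
    (hL : (∑' α : {a : Fin 3 → ℤ // a ≠ 0}, znorm α.1 * ‖u α.1‖ ^ 2) ≤ L₀)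
    (k : Fin 3 → ℤ) (hk : 1 ≤ znorm k) :
    (∑' α : {a : Fin 3 → ℤ //
        0 < znorm a ∧ znorm a ≤ 2 * znorm k ∧
          (1 / 2) * znorm k ^ ((1 : ℝ) - γ) ≤ znorm (k - a)},
      znorm α.1 * ‖u α.1‖ * ‖u (k - α.1)‖)
      ≤ 4 * L₀ * znorm k ^ (γ / 2) :=
  bootstrap_piece_I_bound_general γ L₀ hL₀ u hsum hL k hk
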